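/- arXiv:2101.12673 — 3 statements merged into one kernel-verified Lean document; each statement's English description precedes it below -/
import Mathlib

section
/- Every chordal bipartite graph is weakly chordal, i.e., if G is a bipartite graph in which every cycle of length at least 6 has a chord, then G contains no induced cycle of length at least 5 and no induced complement of a cycle of length at least 5. -/
open SimpleGraph

variable {V : Type*}

/-- A walk is chordless if every `G`-edge between vertices on the walk is an edge of the walk. -/
def SimpleGraph.Walk.Chordless {V : Type*} {G : SimpleGraph V} {x y : V} (p : G.Walk x y) : Prop :=
  ∀ u v, u ∈ p.support → v ∈ p.support → G.Adj u v → p.toSubgraph.Adj u v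

/-- A two-pair: non-adjacent vertices such that every induced (chordless) path
between them has exactly two edges. -/
def SimpleGraph.IsTwoPair (G : SimpleGraph V) (x y : V) : Prop :=
  x ≠ y ∧ ¬ G.Adj x y ∧ ∀ p : G.Walk x y, p.IsPath → p.Chordless → p.length = 2

/-- `G` has a hole: an induced (chordless) cycle of length at least 5. -/
def SimpleGraph.HasHole (G : SimpleGraph V) : Prop :=
  ∃ (x : V) (p : G.Walk x x), p.IsCycle ∧ 5 ≤ p.length ∧ p.Chordless

/-- Weakly chordal graphs: hole-free and antihole-free. -/
def SimpleGraph.WeaklyChordal (G : SimpleGraph V) : Prop :=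
  ¬ G.HasHole ∧ ¬ (Gᶜ).HasHole

/-- The contraction `G(x,y → z)` of a pair of vertices; the vertex `x` of the subtype
plays the role of the new vertex `z`, adjacent to exactly the vertices of `G - {x,y}`
adjacent to at least one of `x`, `y`. -/
def SimpleGraph.contractPair (G : SimpleGraph V) (x y : V) : SimpleGraph {v : V // v ≠ y} where
  Adj a b := a ≠ b ∧ (G.Adj a b ∨ (a.1 = x ∧ G.Adj y b.1) ∨ (b.1 = x ∧ G.Adj a.1 y))
  symm := ⟨by
    rintro a b ⟨hab, h | ⟨h1, h2⟩ | ⟨h1, h2⟩⟩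
    · exact ⟨hab.symm, Or.inl h.symm⟩
    · exact ⟨hab.symm, Or.inr (Or.inr ⟨h1, h2.symm⟩)⟩
    · exact ⟨hab.symm, Or.inr (Or.inl ⟨h1, h2.symm⟩)⟩⟩
  loopless := ⟨fun a => by rintro ⟨h, -⟩; exact h rfl⟩

/-- The square of a graph: join vertices at distance at most 2. -/
def SimpleGraph.square (G : SimpleGraph V) : SimpleGraph V where
  Adj a b := a ≠ b ∧ (G.Adj a b ∨ ∃ w, G.Adj a w ∧ G.Adj w b)
  symm := ⟨by
    rintro a b ⟨hab, h | ⟨w, h1, h2⟩⟩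
    · exact ⟨hab.symm, Or.inl h.symm⟩
    · exact ⟨hab.symm, Or.inr ⟨w, h2.symm, h1.symm⟩⟩⟩
  loopless := ⟨fun a => by rintro ⟨h, -⟩; exact h rfl⟩

/-- A graph is perfect if every induced subgraph has chromatic number equal to clique number. -/
def SimpleGraph.IsPerfect (G : SimpleGraph V) : Prop :=
  ∀ s : Set V, (G.induce s).chromaticNumber = ((G.induce s).cliqueNum : ℕ∞)

/-! Holes are excluded directly: a hole of length at least 6 has a chord by hypothesis, and one of
length 5 is an odd cycle. For an antihole, i.e. a chordless cycle `v₀ v₁ … v_{n-1}` of `Gᶜ`, any two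
vertices that are not consecutive on the cycle are adjacent in `G`; so `v₀ v₂ v₄` is a triangle of
`G` when `n ≥ 6`, and `v₀ v₂ v₄ v₁ v₃ v₀` is a closed 5-walk of `G` when `n = 5`. Both are odd
closed walks, which a bipartite graph does not have. -/

namespace SimpleGraph.Walk

variable {H : SimpleGraph V} {u : V} {p : H.Walk u u}

lemma IsCycle.getVert_eq_getVert_iff (hp : p.IsCycle) {i j : ℕ} (hi : i ≤ p.length)
    (hj : j ≤ p.length) :
    p.getVert i = p.getVert j ↔
      i = j ∨ (i = 0 ∧ j = p.length) ∨ (i = p.length ∧ j = 0) := by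
  constructor
  · intro h
    rcases Nat.eq_zero_or_pos i with rfl | hi0
    · rw [getVert_zero, eq_comm, hp.getVert_endpoint_iff hj] at h
      omega
    rcases Nat.eq_zero_or_pos j with rfl | hj0
    · rw [getVert_zero, hp.getVert_endpoint_iff hi] at h
      omega
    exact Or.inl (hp.getVert_injOn ⟨hi0, hi⟩ ⟨hj0, hj⟩ h)
  · rintro (rfl | ⟨rfl, rfl⟩ | ⟨rfl, rfl⟩) <;> simp

lemma IsCycle.not_toSubgraph_adj_getVert (hp : p.IsCycle) {i j : ℕ} (hij : i + 2 ≤ j)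
    (hj : j < p.length) (hji : j + 2 ≤ i + p.length) :
    ¬ p.toSubgraph.Adj (p.getVert i) (p.getVert j) := by
  rw [toSubgraph_adj_iff]
  rintro ⟨k, hk, hkl⟩
  rcases Sym2.eq_iff.mp hk with ⟨hki, hkj⟩ | ⟨hkj, hki⟩ <;>
  · rw [hp.getVert_eq_getVert_iff (by omega) (by omega)] at hki hkj
    omega

lemma IsCycle.adj_getVert_of_chordless_compl {G : SimpleGraph V} {p : Gᶜ.Walk u u}
    (hp : p.IsCycle) (hch : p.Chordless) {i j : ℕ} (hij : i + 2 ≤ j) (hj : j < p.length)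
    (hji : j + 2 ≤ i + p.length) :
    G.Adj (p.getVert i) (p.getVert j) := by
  have hne : p.getVert i ≠ p.getVert j := by
    rw [Ne, hp.getVert_eq_getVert_iff (by omega) (by omega)]
    omega
  by_contra hG
  exact hp.not_toSubgraph_adj_getVert hij hj hji
    (hch _ _ (getVert_mem_support _ _) (getVert_mem_support _ _) ((compl_adj G _ _).mpr ⟨hne, hG⟩))

end SimpleGraph.Walk

namespace SimpleGraph

variable {G : SimpleGraph V}

lemma not_hasHole_of_colorable_two (hbip : G.Colorable 2)
    (hchord : ∀ (x : V) (p : G.Walk x x), p.IsCycle → 6 ≤ p.length →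
      ∃ u v, u ∈ p.support ∧ v ∈ p.support ∧ G.Adj u v ∧ ¬ p.toSubgraph.Adj u v) :
    ¬ G.HasHole := by
  rintro ⟨x, p, hp, hlen, hch⟩
  rcases (show p.length = 5 ∨ 6 ≤ p.length by omega) with h5 | h6
  · exact (by decide : ¬ Even 5) (h5 ▸ two_colorable_iff_forall_loop_even.mp hbip x p)
  · obtain ⟨u, v, hu, hv, huv, hnot⟩ := hchord x p hp h6
    exact hnot (hch u v hu hv huv)

lemma not_hasHole_compl_of_colorable_two (hbip : G.Colorable 2) : ¬ Gᶜ.HasHole := by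
  rintro ⟨x, p, hp, hlen, hch⟩
  have heven : ∀ {y : V} (w : G.Walk y y), Even w.length :=
    fun w => two_colorable_iff_forall_loop_even.mp hbip _ w
  have adj := fun i j => hp.adj_getVert_of_chordless_compl hch (i := i) (j := j)
  rcases (show p.length = 5 ∨ 6 ≤ p.length by omega) with h5 | h6
  · have h02 := adj 0 2 (by omega) (by omega) (by omega)
    have h24 := adj 2 4 (by omega) (by omega) (by omega)
    have h14 := adj 1 4 (by omega) (by omega) (by omega)
    have h13 := adj 1 3 (by omega) (by omega) (by omega)
    have h03 := adj 0 3 (by omega) (by omega) (by omega)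
    exact (by decide : ¬ Even 5)
      (heven (.cons h02 (.cons h24 (.cons h14.symm (.cons h13 (.cons h03.symm .nil))))))
  · have h02 := adj 0 2 (by omega) (by omega) (by omega)
    have h24 := adj 2 4 (by omega) (by omega) (by omega)
    have h04 := adj 0 4 (by omega) (by omega) (by omega)
    exact (by decide : ¬ Even 3) (heven (.cons h02 (.cons h24 (.cons h04.symm .nil))))

end SimpleGraph

/-- Every chordal bipartite graph is weakly chordal. -/
theorem chordalBipartite_weaklyChordal (G : SimpleGraph V)
    (hbip : G.Colorable 2)
    (hchord : ∀ (x : V) (p : G.Walk x x), p.IsCycle → 6 ≤ p.length →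
      ∃ u v, u ∈ p.support ∧ v ∈ p.support ∧ G.Adj u v ∧ ¬ p.toSubgraph.Adj u v) :
    G.WeaklyChordal :=
  ⟨not_hasHole_of_colorable_two hbip hchord, not_hasHole_compl_of_colorable_two hbip⟩
end

section
/- Let {x,y} be a two-pair in a graph G, and let J = G(x,y → z) be the graph obtained by contracting x and y into a single vertex z adjacent to exactly the vertices of G − {x,y} adjacent to at least one of x, y. Then the chromatic number of G equals the chromatic number of J. -/
open SimpleGraph

variable {V : Type*}

/-!
If a colouring of `G` gives `x` and `y` different colours `a` and `b`, look at the subgraph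
spanned by the vertices coloured `a` or `b`. A shortest `x`–`y` walk in it would be an induced
path of `G`, hence of length two, and its middle vertex would be adjacent to both `x` and `y`
while carrying colour `a` or `b`, which is impossible. So `y` is not in the Kempe chain of `x`,
and swapping `a` and `b` on that chain gives a colouring with `x` and `y` coloured alike, which
descends to the contraction. Conversely, colouring `y` like the new vertex lifts a colouring of
the contraction back to `G`, since `x` and `y` are non-adjacent.
-/

namespace SimpleGraph

variable {G : SimpleGraph V} {u v : V}

namespace Walk

lemma dist_getVert_of_length_eq_dist {p : G.Walk u v} (hp : p.length = G.dist u v) {i : ℕ}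
    (hi : i ≤ p.length) : G.dist u (p.getVert i) = i := by
  rw [← length_eq_dist_of_subwalk hp (p.isSubwalk_take i), take_length]
  exact min_eq_left hi

lemma chordless_of_length_eq_dist {p : G.Walk u v} (hp : p.length = G.dist u v) :
    p.Chordless := by
  intro a b ha hb hab
  obtain ⟨i, rfl, hi⟩ := mem_support_iff_exists_getVert.mp ha
  obtain ⟨j, rfl, hj⟩ := mem_support_iff_exists_getVert.mp hb
  have hdist := hab.diff_dist_adj (u := u)
  rw [dist_getVert_of_length_eq_dist hp hi, dist_getVert_of_length_eq_dist hp hj] at hdist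
  have hij : i ≠ j := by rintro rfl; exact hab.ne rfl
  obtain rfl | rfl : j = i + 1 ∨ i = j + 1 := by lia
  · exact p.toSubgraph_adj_getVert (by lia)
  · exact (p.toSubgraph_adj_getVert (by lia)).symm

lemma Chordless.mapLe {H : SimpleGraph V} (hle : H ≤ G) {p : H.Walk u v} (hp : p.Chordless)
    (hind : ∀ a ∈ p.support, ∀ b ∈ p.support, G.Adj a b → H.Adj a b) :
    (p.mapLe hle).Chordless := by
  intro a b ha hb hab
  rw [support_mapLe_eq_support] at ha hb
  rw [adj_toSubgraph_mapLe]
  exact hp a b ha hb (hind a ha b hb hab)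

end Walk

namespace Coloring

variable {α : Type*} (c : G.Coloring α) (a b : α)

def kempeGraph : SimpleGraph V where
  Adj u v := G.Adj u v ∧ c u ∈ ({a, b} : Set α) ∧ c v ∈ ({a, b} : Set α)
  symm := ⟨fun _ _ ⟨h, hu, hv⟩ => ⟨h.symm, hv, hu⟩⟩
  loopless := ⟨fun _ ⟨h, _⟩ => h.ne rfl⟩

lemma kempeGraph_le : c.kempeGraph a b ≤ G := fun _ _ h => h.1

variable {c a b}

lemma mem_of_kempeGraph_reachable (h : (c.kempeGraph a b).Reachable u v)
    (hu : c u ∈ ({a, b} : Set α)) : c v ∈ ({a, b} : Set α) := by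
  induction (reachable_iff_reflTransGen u v).mp h with
  | refl => exact hu
  | tail _ hadj _ => exact hadj.2.2

variable [DecidableEq α]

lemma kempeSwap_ne_of_reachable_of_not_reachable {x : V} (huv : G.Adj u v)
    (hu : (c.kempeGraph a b).Reachable x u) (hv : ¬ (c.kempeGraph a b).Reachable x v) :
    Equiv.swap a b (c u) ≠ c v := by
  have : c u ∉ ({a, b} : Set α) ∨ c v ∉ ({a, b} : Set α) := by
    by_contra! h
    exact hv (hu.trans (Adj.reachable ⟨huv, h⟩))
  rcases this with h | h <;> simp only [Set.mem_insert_iff, Set.mem_singleton_iff, not_or] at h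
  · rw [Equiv.swap_apply_of_ne_of_ne h.1 h.2]
    exact c.valid huv
  · rw [← Equiv.swap_apply_of_ne_of_ne h.1 h.2]
    exact (Equiv.swap a b).injective.ne (c.valid huv)

variable (c a b) in
open Classical in
noncomputable def kempeSwap (x : V) : G.Coloring α :=
  Coloring.mk
    (fun v => if (c.kempeGraph a b).Reachable x v then Equiv.swap a b (c v) else c v)
    (by
      intro u v huv
      by_cases hu : (c.kempeGraph a b).Reachable x u <;>
        by_cases hv : (c.kempeGraph a b).Reachable x v <;> simp only [hu, hv, if_true, if_false]
      · exact (Equiv.swap a b).injective.ne (c.valid huv)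
      · exact kempeSwap_ne_of_reachable_of_not_reachable huv hu hv
      · exact (kempeSwap_ne_of_reachable_of_not_reachable huv.symm hv hu).symm
      · exact c.valid huv)

lemma kempeSwap_apply_of_reachable {x : V} (h : (c.kempeGraph a b).Reachable x v) :
    c.kempeSwap a b x v = Equiv.swap a b (c v) :=
  if_pos h

lemma kempeSwap_apply_of_not_reachable {x : V} (h : ¬ (c.kempeGraph a b).Reachable x v) :
    c.kempeSwap a b x v = c v :=
  if_neg h

end Coloring

variable {x y : V}

open Classical in
noncomputable def contractPairHom (hxy : x ≠ y) (hnadj : ¬ G.Adj x y) :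
    G →g G.contractPair x y where
  toFun v := if hv : v = y then ⟨x, hxy⟩ else ⟨v, hv⟩
  map_rel' := by
    intro u v huv
    by_cases hu : u = y <;> by_cases hv : v = y <;> simp only [hu, hv, ↓reduceDIte]
    · exact absurd (hu.trans hv.symm) huv.ne
    · subst hu
      refine ⟨Subtype.coe_ne_coe.mp fun hxv => hnadj ?_, Or.inr (Or.inl ⟨rfl, huv⟩)⟩
      exact (show x = v from hxv) ▸ huv.symm
    · subst hv
      refine ⟨Subtype.coe_ne_coe.mp fun hux => hnadj ?_, Or.inr (Or.inr ⟨rfl, huv⟩)⟩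
      exact (show u = x from hux) ▸ huv
    · exact ⟨Subtype.coe_ne_coe.mp huv.ne, Or.inl huv⟩

def Coloring.contractPair {α : Type*} (c : G.Coloring α) (h : c x = c y) :
    (G.contractPair x y).Coloring α :=
  Coloring.mk (fun a => c a.1) <| by
    rintro a b ⟨-, hab | ⟨ha, hb⟩ | ⟨hb, ha⟩⟩
    · exact c.valid hab
    · rw [ha, h]; exact c.valid hb
    · rw [hb, h]; exact c.valid ha

namespace IsTwoPair

lemma not_reachable_kempeGraph (h : G.IsTwoPair x y) {α : Type*} (c : G.Coloring α) :
    ¬ (c.kempeGraph (c x) (c y)).Reachable x y := by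
  classical
  intro hr
  obtain ⟨p, hp⟩ := hr.exists_walk_length_eq_dist
  have hlen : p.length = 2 := by
    rw [← Walk.length_mapLe (c.kempeGraph_le _ _)]
    refine h.2.2 _ ((p.isPath_of_length_eq_dist hp).mapLe _)
      ((p.chordless_of_length_eq_dist hp).mapLe _ fun a ha b hb hab => ⟨hab, ?_, ?_⟩)
    · exact c.mem_of_kempeGraph_reachable (p.takeUntil a ha).reachable (Set.mem_insert _ _)
    · exact c.mem_of_kempeGraph_reachable (p.takeUntil b hb).reachable (Set.mem_insert _ _)
  have hxw := p.adj_getVert_succ (i := 0) (by lia)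
  have hwy := p.adj_getVert_succ (i := 1) (by lia)
  rw [Walk.getVert_zero] at hxw
  rw [show 1 + 1 = p.length from hlen.symm, Walk.getVert_length] at hwy
  rcases hxw.2.2 with hw | hw
  · exact c.valid hxw.1 hw.symm
  · exact c.valid hwy.1 hw

lemma kempeSwap_apply_eq (h : G.IsTwoPair x y) {α : Type*} [DecidableEq α]
    (c : G.Coloring α) : c.kempeSwap (c x) (c y) x x = c.kempeSwap (c x) (c y) x y := by
  rw [Coloring.kempeSwap_apply_of_reachable (Reachable.refl x),
    Coloring.kempeSwap_apply_of_not_reachable (h.not_reachable_kempeGraph c),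
    Equiv.swap_apply_left]

end IsTwoPair

end SimpleGraph

/-- contracting a two-pair preserves the chromatic number. -/
theorem chromaticNumber_contractPair (G : SimpleGraph V) (x y : V)
    (h : G.IsTwoPair x y) :
    G.chromaticNumber = (G.contractPair x y).chromaticNumber := by
  refine le_antisymm (chromaticNumber_mono_of_hom (contractPairHom h.1 h.2.1)) ?_
  refine chromaticNumber_le_of_forall_imp fun n ⟨c⟩ => ?_
  exact ⟨(c.kempeSwap (c x) (c y) x).contractPair (h.kempeSwap_apply_eq c)⟩
end

section
/- If {x,y} is a two-pair in a graph G, then every vertex on an induced path from x to y of length 2 lies in N(x) ∩ N(y), so N(x) ∩ N(y) separates x from y in G (assuming x and y are in the same connected component). -/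
open SimpleGraph

variable {V : Type*}

lemma walk_length_two {G : SimpleGraph V} {x y : V} (p : G.Walk x y) (hl : p.length = 2) :
    ∃ m, G.Adj x m ∧ G.Adj m y ∧ p.support = [x, m, y] := by
  cases p with
  | nil => simp at hl
  | cons h1 q =>
    cases q with
    | nil => simp at hl
    | cons h2 q2 =>
      simp only [Walk.length_cons] at hl
      have h0 : q2.length = 0 := by omega
      obtain rfl := Walk.eq_of_length_eq_zero h0
      exact ⟨_, h1, h2, by
        simp [Walk.nil_iff_support_eq.mp (Walk.nil_iff_length_eq.mpr h0)]⟩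

lemma edge_of_length_one {G : SimpleGraph V} {u v : V} (t : G.Walk u v) (hl : t.length = 1) :
    s(u, v) ∈ t.edges := by
  cases t with
  | nil => simp at hl
  | cons h q =>
    simp only [Walk.length_cons, Nat.add_eq_right] at hl
    have := Walk.eq_of_length_eq_zero hl
    subst this
    simp

lemma shorten_aux [DecidableEq V] {G : SimpleGraph V} {x y u v : V} (A : G.Walk x u) (B : G.Walk u y)
    (hadj : G.Adj u v) (hv : v ∈ B.support) (hne : s(u, v) ∉ (A.append B).edges) :
    ∃ r : G.Walk x y, r.IsPath ∧ r.length < (A.append B).length ∧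
      ∀ w ∈ r.support, w ∈ (A.append B).support := by
  have htl : 2 ≤ (B.takeUntil v hv).length := by
    rcases Nat.lt_or_ge (B.takeUntil v hv).length 2 with hlt | hge
    · interval_cases hh : (B.takeUntil v hv).length
      · exact absurd (Walk.eq_of_length_eq_zero hh) hadj.ne
      · exact absurd (by
          rw [Walk.edges_append, List.mem_append]
          exact Or.inr (Walk.edges_takeUntil_subset B hv (edge_of_length_one _ hh))) hne
    · exact hge
  refine ⟨(A.append (Walk.cons hadj (B.dropUntil v hv))).bypass, Walk.bypass_isPath _, ?_, ?_⟩
  · calc (A.append (Walk.cons hadj (B.dropUntil v hv))).bypass.length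
        ≤ (A.append (Walk.cons hadj (B.dropUntil v hv))).length :=
          Walk.length_bypass_le _
      _ < (A.append B).length := by
          rw [Walk.length_append, Walk.length_append, Walk.length_cons]
          have := congrArg Walk.length (B.take_spec hv)
          rw [Walk.length_append] at this
          omega
  · intro w hw
    have hw2 := Walk.support_bypass_subset _ hw
    rw [Walk.mem_support_append_iff] at hw2 ⊢
    rcases hw2 with h1 | h2
    · exact Or.inl h1
    · rw [Walk.support_cons, List.mem_cons] at h2
      rcases h2 with rfl | h3
      · exact Or.inr B.start_mem_support
      · exact Or.inr (Walk.support_dropUntil_subset B hv h3)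

lemma shorten [DecidableEq V] {G : SimpleGraph V} {x y : V} (q : G.Walk x y) (hnc : ¬ q.Chordless) :
    ∃ r : G.Walk x y, r.IsPath ∧ r.length < q.length ∧ ∀ w ∈ r.support, w ∈ q.support := by
  simp only [Walk.Chordless, not_forall] at hnc
  obtain ⟨u, v, hu, hv, hadj, hns⟩ := hnc
  have hne : s(u, v) ∉ q.edges := by
    intro he
    exact hns ((Subgraph.mem_edgeSet).mp ((Walk.mem_edges_toSubgraph q).mpr he))
  rw [← q.take_spec hu, Walk.mem_support_append_iff] at hv
  rcases hv with hv | hv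
  · -- v comes before u : decompose at v within takeUntil u
    have hq : q = (((q.takeUntil u hu).takeUntil v hv).append
        (((q.takeUntil u hu).dropUntil v hv).append (q.dropUntil u hu))) := by
      conv_lhs => rw [← q.take_spec hu, ← (q.takeUntil u hu).take_spec hv]
      rw [Walk.append_assoc]
    have hu' : u ∈ (((q.takeUntil u hu).dropUntil v hv).append (q.dropUntil u hu)).support := by
      rw [Walk.mem_support_append_iff]
      exact Or.inr (q.dropUntil u hu).start_mem_support
    have hne' : s(v, u) ∉ (((q.takeUntil u hu).takeUntil v hv).append
        (((q.takeUntil u hu).dropUntil v hv).append (q.dropUntil u hu))).edges := by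
      rw [← hq, Sym2.eq_swap]; exact hne
    obtain ⟨r, h1, h2, h3⟩ := shorten_aux _ _ hadj.symm hu' hne'
    rw [← hq] at h2 h3
    exact ⟨r, h1, h2, h3⟩
  · have hne' : s(u, v) ∉ ((q.takeUntil u hu).append (q.dropUntil u hu)).edges := by
      rw [Walk.take_spec]; exact hne
    obtain ⟨r, h1, h2, h3⟩ := shorten_aux (q.takeUntil u hu) (q.dropUntil u hu) hadj hv hne'
    rw [Walk.take_spec] at h2 h3
    exact ⟨r, h1, h2, h3⟩


/-- every vertex on an induced path of length 2 between a two-pair lies in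
`N(x) ∩ N(y)`, and `N(x) ∩ N(y)` separates `x` from `y`. -/
theorem twoPair_common_neighborhood_separates (G : SimpleGraph V) (x y : V)
    (h : G.IsTwoPair x y) :
    (∀ (p : G.Walk x y), p.IsPath → p.Chordless → p.length = 2 →
      ∀ w ∈ p.support, w ≠ x → w ≠ y → G.Adj x w ∧ G.Adj y w) ∧
    (G.Reachable x y →
      ∀ (p : G.Walk x y), p.IsPath → ∃ w ∈ p.support, G.Adj x w ∧ G.Adj y w) := by
  classical
  constructor
  · intro p _ _ hl w hw hwx hwy
    obtain ⟨m, h1, h2, hs⟩ := walk_length_two p hl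
    rw [hs] at hw
    simp only [List.mem_cons, List.not_mem_nil, or_false] at hw
    rcases hw with rfl | rfl | rfl
    · exact absurd rfl hwx
    · exact ⟨h1, h2.symm⟩
    · exact absurd rfl hwy
  · intro _ p hp
    obtain ⟨n, hn⟩ : ∃ n, p.length ≤ n := ⟨p.length, le_refl _⟩
    induction n generalizing p with
    | zero =>
      exact absurd (Walk.eq_of_length_eq_zero (Nat.le_zero.mp hn)) h.1
    | succ n ih =>
      by_cases hc : p.Chordless
      · have hl := h.2.2 p hp hc
        obtain ⟨m, h1, h2, hs⟩ := walk_length_two p hl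
        exact ⟨m, by rw [hs]; simp, h1, h2.symm⟩
      · obtain ⟨r, h1, h2, h3⟩ := shorten p hc
        obtain ⟨w, hw1, hw2⟩ := ih r h1 (by omega)
        exact ⟨w, h3 w hw1, hw2⟩
end
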